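/- Let H be a weak Hopf algebra, C a coalgebra, and · : H⊗C → C a linear map; define ↼ : C*⊗H → C* by (α↼h)(c) = α(h·c). If ↼ makes the dual convolution algebra C* a right partial H-module algebra, then · makes C a left partial H-module coalgebra. Moreover, if C* is a symmetric right partial H-module algebra via ↼, then C is a symmetric left partial H-module coalgebra via ·. -/

import Mathlib

open TensorProduct Coalgebra

noncomputable section

variable (k : Type*) [Field k]

section WeakHopfDefs

variable (H : Type*) [Ring H] [Algebra k H] [Coalgebra k H]

/-- The target map `ε_t(h) = ε(1₁ h) 1₂` of a weak bialgebra. -/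
def wεt (h : H) : H :=
  (TensorProduct.lid k H)
    ((TensorProduct.map (counit (R := k) ∘ₗ LinearMap.mulRight k h) (LinearMap.id))
      (comul (R := k) (1 : H)))

/-- The source map `ε_s(h) = 1₁ ε(h 1₂)` of a weak bialgebra. -/
def wεs (h : H) : H :=
  (TensorProduct.rid k H)
    ((TensorProduct.map (LinearMap.id) (counit (R := k) ∘ₗ LinearMap.mulLeft k h))
      (comul (R := k) (1 : H)))

/-- A weak Hopf algebra structure on an algebra `H` which is also a coalgebra:
the weak bialgebra axioms together with an antipode `S`. -/
structure WeakHopf : Type _ where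
  /-- Δ is multiplicative -/
  comul_mul : ∀ h g : H, comul (R := k) (h * g) = comul (R := k) h * comul (R := k) g
  /-- ε(hgl) = Σ ε(h g₁) ε(g₂ l) -/
  counit_weak_mul : ∀ h g l : H, counit (R := k) (h * g * l)
      = LinearMap.mul' k k
          ((TensorProduct.map (counit (R := k) ∘ₗ LinearMap.mulLeft k h)
              (counit (R := k) ∘ₗ LinearMap.mulRight k l)) (comul (R := k) g))
  /-- ε(hgl) = Σ ε(h g₂) ε(g₁ l) -/
  counit_weak_mul' : ∀ h g l : H, counit (R := k) (h * g * l)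
      = LinearMap.mul' k k
          ((TensorProduct.map (counit (R := k) ∘ₗ LinearMap.mulLeft k h)
              (counit (R := k) ∘ₗ LinearMap.mulRight k l))
            ((TensorProduct.comm k H H) (comul (R := k) g)))
  /-- (1 ⊗ Δ(1))(Δ(1) ⊗ 1) = Δ²(1) -/
  comul_one_left :
      ((1 : H) ⊗ₜ[k] comul (R := k) (1 : H))
          * ((TensorProduct.assoc k H H H) (comul (R := k) (1 : H) ⊗ₜ[k] (1 : H)))
        = (LinearMap.lTensor H (comul (R := k))) (comul (R := k) (1 : H))
  /-- (Δ(1) ⊗ 1)(1 ⊗ Δ(1)) = Δ²(1) -/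
  comul_one_right :
      ((TensorProduct.assoc k H H H) (comul (R := k) (1 : H) ⊗ₜ[k] (1 : H)))
          * ((1 : H) ⊗ₜ[k] comul (R := k) (1 : H))
        = (LinearMap.lTensor H (comul (R := k))) (comul (R := k) (1 : H))
  /-- the antipode -/
  S : H →ₗ[k] H
  /-- Σ h₁ S(h₂) = ε_t(h) -/
  antipode_t : ∀ h : H,
      LinearMap.mul' k H ((LinearMap.lTensor H S) (comul (R := k) h)) = wεt k H h
  /-- Σ S(h₁) h₂ = ε_s(h) -/
  antipode_s : ∀ h : H,
      LinearMap.mul' k H ((LinearMap.rTensor H S) (comul (R := k) h)) = wεs k H h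
  /-- Σ S(h₁) h₂ S(h₃) = S(h) -/
  antipode_mid : ∀ h : H,
      LinearMap.mul' k H
        ((TensorProduct.map S (LinearMap.mul' k H ∘ₗ LinearMap.lTensor H S))
          ((LinearMap.lTensor H (comul (R := k))) (comul (R := k) h))) = S h

end WeakHopfDefs

section Actions

variable (H : Type*) [Ring H] [Algebra k H] [Coalgebra k H]
variable (C : Type*) [AddCommGroup C] [Module k C] [Coalgebra k C]

/-- The Sweedler sum `Σ (h g₁ · c₁) ε(g₂ · c₂)` appearing in (PMC3). -/
def pmc3RHS (act : H →ₗ[k] C →ₗ[k] C) (h g : H) (c : C) : C :=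
  (TensorProduct.rid k C)
    ((TensorProduct.map
        ((TensorProduct.lift act) ∘ₗ (LinearMap.rTensor C (LinearMap.mulLeft k h)))
        (counit (R := k) ∘ₗ (TensorProduct.lift act)))
      ((TensorProduct.tensorTensorTensorComm k H H C C)
        (comul (R := k) g ⊗ₜ[k] comul (R := k) c)))

/-- The Sweedler sum `Σ ε(g₁ · c₁) (h g₂ · c₂)` appearing in the symmetry condition. -/
def pmc3symRHS (act : H →ₗ[k] C →ₗ[k] C) (h g : H) (c : C) : C :=
  (TensorProduct.lid k C)
    ((TensorProduct.map
        (counit (R := k) ∘ₗ (TensorProduct.lift act))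
        ((TensorProduct.lift act) ∘ₗ (LinearMap.rTensor C (LinearMap.mulLeft k h))))
      ((TensorProduct.tensorTensorTensorComm k H H C C)
        (comul (R := k) g ⊗ₜ[k] comul (R := k) c)))

/-- (MC2)/(PMC2): `Δ(h·c) = (h₁·c₁) ⊗ (h₂·c₂)`. -/
def SweedlerComulCompat (act : H →ₗ[k] C →ₗ[k] C) : Prop :=
  ∀ (h : H) (c : C),
    comul (R := k) (act h c)
      = (TensorProduct.map (TensorProduct.lift act) (TensorProduct.lift act))
          ((TensorProduct.tensorTensorTensorComm k H H C C)
            (comul (R := k) h ⊗ₜ[k] comul (R := k) c))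

/-- `C` is a left partial `H`-module coalgebra via `act` (`act h c = h · c`). -/
structure IsPartialModuleCoalgebra (act : H →ₗ[k] C →ₗ[k] C) : Prop where
  pmc1 : ∀ c : C, act 1 c = c
  pmc2 : SweedlerComulCompat k H C act
  pmc3 : ∀ (h g : H) (c : C), act h (act g c) = pmc3RHS k H C act h g c

/-- `C` is a symmetric left partial `H`-module coalgebra via `act`. -/
structure IsSymmetricPartialModuleCoalgebra (act : H →ₗ[k] C →ₗ[k] C)
    extends IsPartialModuleCoalgebra k H C act : Prop where
  pmc3sym : ∀ (h g : H) (c : C), act h (act g c) = pmc3symRHS k H C act h g c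

/-- `C` is a left `H`-module coalgebra via `act`. -/
structure IsModuleCoalgebra (act : H →ₗ[k] C →ₗ[k] C) : Prop where
  mc1 : ∀ c : C, act 1 c = c
  mc2 : SweedlerComulCompat k H C act
  mc3 : ∀ (h g : H) (c : C), act h (act g c) = act (h * g) c
  mc4 : ∀ (h : H) (c : C), counit (R := k) (act h c) = counit (R := k) (act (wεs k H h) c)

end Actions

end

noncomputable section DualDefs

variable (k : Type*) [Field k]
variable (H : Type*) [Ring H] [Algebra k H] [Coalgebra k H]
variable (C : Type*) [AddCommGroup C] [Module k C] [Coalgebra k C]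

/-- The convolution product on the dual `C* = Hom_k(C, k)`: `(αβ)(c) = α(c₁)β(c₂)`. -/
def convDual (α β : C →ₗ[k] k) : C →ₗ[k] k :=
  (LinearMap.mul' k k) ∘ₗ (TensorProduct.map α β) ∘ₗ (comul (R := k))

/-- `C*` is a right partial `H`-module algebra via `(α ↼ h)(c) = α(h · c)`, i.e.
`α ↼ h = α ∘ₗ act h`.  The three axioms are: `α ↼ 1 = α`;
`(αβ) ↼ h = (α ↼ h₁)(β ↼ h₂)`; and `(α ↼ h) ↼ g = (α ↼ h g₁)(1_{C*} ↼ g₂)`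
(written out on elements, with `1_{C*} = ε`). -/
structure IsDualRightPartialModuleAlgebra (act : H →ₗ[k] C →ₗ[k] C) : Prop where
  rpma1 : ∀ α : C →ₗ[k] k, α ∘ₗ act 1 = α
  rpma2 : ∀ (h : H) (α β : C →ₗ[k] k) (c : C),
      convDual k C α β (act h c)
        = LinearMap.mul' k k
            ((TensorProduct.map (α ∘ₗ TensorProduct.lift act) (β ∘ₗ TensorProduct.lift act))
              ((TensorProduct.tensorTensorTensorComm k H H C C)
                (comul (R := k) h ⊗ₜ[k] comul (R := k) c)))
  rpma3 : ∀ (h g : H) (α : C →ₗ[k] k) (c : C),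
      α (act h (act g c))
        = LinearMap.mul' k k
            ((TensorProduct.map
                (α ∘ₗ (TensorProduct.lift act) ∘ₗ (LinearMap.rTensor C (LinearMap.mulLeft k h)))
                (counit (R := k) ∘ₗ TensorProduct.lift act))
              ((TensorProduct.tensorTensorTensorComm k H H C C)
                (comul (R := k) g ⊗ₜ[k] comul (R := k) c)))

/-- `C*` is a *symmetric* right partial `H`-module algebra:
additionally `(α ↼ h) ↼ g = (1_{C*} ↼ g₁)(α ↼ h g₂)`. -/
structure IsDualSymmetricRightPartialModuleAlgebra (act : H →ₗ[k] C →ₗ[k] C)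
    extends IsDualRightPartialModuleAlgebra k H C act : Prop where
  rpma3sym : ∀ (h g : H) (α : C →ₗ[k] k) (c : C),
      α (act h (act g c))
        = LinearMap.mul' k k
            ((TensorProduct.map
                (counit (R := k) ∘ₗ TensorProduct.lift act)
                (α ∘ₗ (TensorProduct.lift act) ∘ₗ (LinearMap.rTensor C (LinearMap.mulLeft k h))))
              ((TensorProduct.tensorTensorTensorComm k H H C C)
                (comul (R := k) g ⊗ₜ[k] comul (R := k) c)))

end DualDefs

/-! The dual `C*` detects everything about `C` over a field: linear functionals separate the
points of `C`, and the products `α(x₁)β(x₂)` separate the points of `C ⊗ C`. Each axiom of a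
partial module coalgebra is an equation in `C` or `C ⊗ C`; evaluated on such functionals it
becomes, after unfolding the convolution product, exactly the corresponding axiom of `C*`. -/

section Separation

variable {K M N : Type*} [Field K] [AddCommGroup M] [Module K M] [AddCommGroup N] [Module K N]

theorem LinearMap.ext_of_forall_dual_apply_eq {x y : M} (h : ∀ α : M →ₗ[K] K, α x = α y) :
    x = y :=
  Module.eval_apply_injective K (LinearMap.ext h)

theorem TensorProduct.ext_of_forall_mul'_map_dual_eq {x y : M ⊗[K] N}
    (h : ∀ (α : M →ₗ[K] K) (β : N →ₗ[K] K),
      LinearMap.mul' K K (map α β x) = LinearMap.mul' K K (map α β y)) :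
    x = y := by
  let b := Module.Basis.ofVectorSpace K M
  let c := Module.Basis.ofVectorSpace K N
  have repr_eq : ∀ i j z, (b.tensorProduct c).repr z (i, j)
      = LinearMap.mul' K K (map (b.coord i) (c.coord j) z) := by
    intro i j z
    induction z using TensorProduct.induction_on with
    | zero => simp
    | tmul m n => simp [mul_comm]
    | add z w hz hw => simp only [map_add, Finsupp.add_apply, hz, hw]
  refine (b.tensorProduct c).ext_elem fun ⟨i, j⟩ => ?_
  rw [repr_eq, repr_eq]
  exact h (b.coord i) (c.coord j)

end Separation

section PairingWithUnitors

variable {R M N P : Type*} [CommRing R] [AddCommGroup M] [Module R M] [AddCommGroup N]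
  [Module R N] [AddCommGroup P] [Module R P]

theorem TensorProduct.dual_apply_rid_map (α : P →ₗ[R] R) (f : M →ₗ[R] P) (g : N →ₗ[R] R)
    (x : M ⊗[R] N) :
    α (TensorProduct.rid R P (map f g x)) = LinearMap.mul' R R (map (α ∘ₗ f) g x) := by
  induction x using TensorProduct.induction_on with
  | zero => simp
  | tmul m n => simp [mul_comm]
  | add x y hx hy => simp only [map_add, hx, hy]

theorem TensorProduct.dual_apply_lid_map (α : P →ₗ[R] R) (g : M →ₗ[R] R) (f : N →ₗ[R] P)
    (x : M ⊗[R] N) :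
    α (TensorProduct.lid R P (map g f x)) = LinearMap.mul' R R (map g (α ∘ₗ f) x) := by
  induction x using TensorProduct.induction_on with
  | zero => simp
  | tmul m n => simp
  | add x y hx hy => simp only [map_add, hx, hy]

end PairingWithUnitors

section DualPartialModuleAlgebra

variable {k H C : Type*} [Field k] [Ring H] [Algebra k H] [Coalgebra k H]
  [AddCommGroup C] [Module k C] [Coalgebra k C] {act : H →ₗ[k] C →ₗ[k] C}

namespace IsDualRightPartialModuleAlgebra

variable (hD : IsDualRightPartialModuleAlgebra k H C act)
include hD

theorem one_act (c : C) : act 1 c = c :=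
  LinearMap.ext_of_forall_dual_apply_eq fun α => LinearMap.congr_fun (hD.rpma1 α) c

theorem sweedlerComulCompat : SweedlerComulCompat k H C act := by
  intro h c
  refine TensorProduct.ext_of_forall_mul'_map_dual_eq fun α β => ?_
  simpa only [convDual, LinearMap.comp_apply, TensorProduct.map_comp] using hD.rpma2 h α β c

theorem act_act (h g : H) (c : C) : act h (act g c) = pmc3RHS k H C act h g c :=
  LinearMap.ext_of_forall_dual_apply_eq fun α => by
    rw [hD.rpma3 h g α c, pmc3RHS, TensorProduct.dual_apply_rid_map]

theorem isPartialModuleCoalgebra : IsPartialModuleCoalgebra k H C act :=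
  ⟨hD.one_act, hD.sweedlerComulCompat, hD.act_act⟩

end IsDualRightPartialModuleAlgebra

namespace IsDualSymmetricRightPartialModuleAlgebra

variable (hD : IsDualSymmetricRightPartialModuleAlgebra k H C act)
include hD

theorem act_act_symm (h g : H) (c : C) : act h (act g c) = pmc3symRHS k H C act h g c :=
  LinearMap.ext_of_forall_dual_apply_eq fun α => by
    rw [hD.rpma3sym h g α c, pmc3symRHS, TensorProduct.dual_apply_lid_map]

theorem isSymmetricPartialModuleCoalgebra : IsSymmetricPartialModuleCoalgebra k H C act :=
  ⟨hD.toIsDualRightPartialModuleAlgebra.isPartialModuleCoalgebra, hD.act_act_symm⟩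

end IsDualSymmetricRightPartialModuleAlgebra

end DualPartialModuleAlgebra

theorem partial_module_coalgebra_of_dual
    (k : Type*) [Field k] (H : Type*) [Ring H] [Algebra k H] [Coalgebra k H]
    (C : Type*) [AddCommGroup C] [Module k C] [Coalgebra k C]
    (act : H →ₗ[k] C →ₗ[k] C) :
    (IsDualRightPartialModuleAlgebra k H C act → IsPartialModuleCoalgebra k H C act) ∧
    (IsDualSymmetricRightPartialModuleAlgebra k H C act →
      IsSymmetricPartialModuleCoalgebra k H C act) :=
  ⟨IsDualRightPartialModuleAlgebra.isPartialModuleCoalgebra,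
    IsDualSymmetricRightPartialModuleAlgebra.isSymmetricPartialModuleCoalgebra⟩
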